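/- Let A ∈ ℝ^{m×n}, and suppose M_1 = P_{k+1} B_{k+} Q_k^T and M_2 = P_k B_k Q_k^T where P_{k+1} ∈ ℝ^{m×(k+1)} and Q_k ∈ ℝ^{n×k} have orthonormal columns, B_{k+} ∈ ℝ^{(k+1)×k} is lower bidiagonal, B_k is B_{k+} with its last row deleted, and P_k consists of the first k columns of P_{k+1}. Then ‖A − M_2‖₂ ≥ ‖A − M_1‖₂; i.e., the rank-k approximation P_k B_k Q_k^T to A is no more accurate (in spectral norm) than P_{k+1} B_{k+} Q_k^T. -/

import Mathlib

open Matrix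

/-- Euclidean norm of a vector. -/
noncomputable def enorm {n : ℕ} (v : Fin n → ℝ) : ℝ := Real.sqrt (∑ i, v i ^ 2)

/-- Spectral norm (largest singular value) of a matrix. -/
noncomputable def specNorm {p n : ℕ} (M : Matrix (Fin p) (Fin n) ℝ) : ℝ :=
  sSup {t | ∃ v : Fin n → ℝ, _root_.enorm v = 1 ∧ t = _root_.enorm (M.mulVec v)}

/-- Smallest singular value of a matrix (with at least as many rows as columns). -/
noncomputable def sigmaMin {p n : ℕ} (M : Matrix (Fin p) (Fin n) ℝ) : ℝ :=
  sInf {t | ∃ v : Fin n → ℝ, _root_.enorm v = 1 ∧ t = _root_.enorm (M.mulVec v)}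

/-- `t` is a singular value of `M`, i.e. `t ^ 2` is an eigenvalue of `Mᵀ * M`. -/
def IsSingVal {p n : ℕ} (M : Matrix (Fin p) (Fin n) ℝ) (t : ℝ) : Prop :=
  ∃ v : Fin n → ℝ, v ≠ 0 ∧ (Mᵀ * M).mulVec v = (t ^ 2) • v

/-!
The Golub–Kahan relation `A Qₖ = Pₖ₊₁ Bₖ₊` says that `A - M₁` vanishes on the range of `Qₖ`, while
`A - M₂ = (A - M₁) + D Qₖᵀ` differs from it only there. Hence `A - M₁ = (A - M₂)(I - Qₖ Qₖᵀ)`, and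
the orthogonal projection `I - Qₖ Qₖᵀ` has spectral norm at most `1`.
-/

open scoped Matrix.Norms.L2Operator

lemma enorm_eq_norm_toLp {n : ℕ} (v : Fin n → ℝ) : _root_.enorm v = ‖WithLp.toLp 2 v‖ := by
  simp [_root_.enorm, EuclideanSpace.norm_eq]

lemma specNorm_eq_l2_opNorm {p n : ℕ} (M : Matrix (Fin p) (Fin n) ℝ) : specNorm M = ‖M‖ := by
  rw [l2_opNorm_def, ← ContinuousLinearMap.sSup_sphere_eq_norm, specNorm]
  congr 1
  ext t
  constructor
  · rintro ⟨v, hv, rfl⟩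
    exact ⟨WithLp.toLp 2 v, by simpa [enorm_eq_norm_toLp] using hv, by simp [enorm_eq_norm_toLp]⟩
  · rintro ⟨x, hx, rfl⟩
    exact ⟨x.ofLp, by simpa [enorm_eq_norm_toLp] using hx, by rw [enorm_eq_norm_toLp]; rfl⟩

section

variable {𝕜 m n k : Type*} [RCLike 𝕜] [Fintype m] [Fintype n] [Fintype k]

lemma isStarProjection_mul_conjTranspose [DecidableEq k] {Q : Matrix n k 𝕜} (hQ : Qᴴ * Q = 1) :
    IsStarProjection (Q * Qᴴ) where
  isIdempotentElem := by
    rw [IsIdempotentElem, Matrix.mul_assoc, ← Matrix.mul_assoc Qᴴ, hQ, Matrix.one_mul]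
  isSelfAdjoint := by simp [IsSelfAdjoint, star_eq_conjTranspose]

lemma l2_opNorm_le_add_mul_conjTranspose [DecidableEq n] [DecidableEq k]
    {X : Matrix m n 𝕜} {Q : Matrix n k 𝕜}
    (hQ : Qᴴ * Q = 1) (hXQ : X * Q = 0) (D : Matrix m k 𝕜) : ‖X‖ ≤ ‖X + D * Qᴴ‖ := by
  have hfactor : X = (X + D * Qᴴ) * (1 - Q * Qᴴ) := by
    rw [Matrix.mul_sub, Matrix.mul_one, Matrix.add_mul, ← Matrix.mul_assoc, hXQ, Matrix.zero_mul,
      zero_add, Matrix.mul_assoc, ← Matrix.mul_assoc Qᴴ, hQ, Matrix.one_mul, add_sub_cancel_right]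
  calc ‖X‖ = ‖(X + D * Qᴴ) * (1 - Q * Qᴴ)‖ := by rw [← hfactor]
    _ ≤ ‖X + D * Qᴴ‖ * ‖1 - Q * Qᴴ‖ := l2_opNorm_mul _ _
    _ ≤ ‖X + D * Qᴴ‖ :=
      mul_le_of_le_one_right (norm_nonneg _)
        ((isStarProjection_mul_conjTranspose hQ).one_sub.norm_le)

end

theorem stmt8_general {m n k : ℕ}
    (A : Matrix (Fin m) (Fin n) ℝ)
    (Pk1 : Matrix (Fin m) (Fin (k + 1)) ℝ) (Qk : Matrix (Fin n) (Fin k) ℝ)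
    (Bp : Matrix (Fin (k + 1)) (Fin k) ℝ)
    (hQ : Qkᵀ * Qk = 1)
    -- Golub–Kahan relations
    (hGK1 : A * Qk = Pk1 * Bp) :
    specNorm (A - Pk1 * Bp * Qkᵀ) ≤
      specNorm (A - (Pk1.submatrix id Fin.castSucc) * (Bp.submatrix Fin.castSucc id) * Qkᵀ) := by
  rw [← conjTranspose_eq_transpose_of_trivial] at hQ ⊢
  have hresidual : (A - Pk1 * Bp * Qkᴴ) * Qk = 0 := by
    rw [Matrix.sub_mul, hGK1, Matrix.mul_assoc, hQ, Matrix.mul_one, sub_self]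
  rw [specNorm_eq_l2_opNorm, specNorm_eq_l2_opNorm]
  convert l2_opNorm_le_add_mul_conjTranspose hQ hresidual
    (Pk1 * Bp - Pk1.submatrix id Fin.castSucc * Bp.submatrix Fin.castSucc id) using 2
  rw [Matrix.sub_mul]
  abel

theorem stmt8 {m n k : ℕ}
    (A : Matrix (Fin m) (Fin n) ℝ)
    (Pk1 : Matrix (Fin m) (Fin (k + 1)) ℝ) (Qk : Matrix (Fin n) (Fin k) ℝ)
    (Bp : Matrix (Fin (k + 1)) (Fin k) ℝ)
    (hP : Pk1ᵀ * Pk1 = 1) (hQ : Qkᵀ * Qk = 1)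
    (hbidiag : ∀ (i : Fin (k + 1)) (j : Fin k), i ≠ j.castSucc → i ≠ j.succ → Bp i j = 0)
    -- Golub–Kahan relations
    (hGK1 : A * Qk = Pk1 * Bp)
    (hGK2 : Aᵀ * (Pk1.submatrix id Fin.castSucc) = Qk * (Bp.submatrix Fin.castSucc id)ᵀ) :
    specNorm (A - Pk1 * Bp * Qkᵀ) ≤
      specNorm (A - (Pk1.submatrix id Fin.castSucc) * (Bp.submatrix Fin.castSucc id) * Qkᵀ) :=
  stmt8_general A Pk1 Qk Bp hQ hGK1
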